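/- arXiv:1003.1568 — 3 statements merged into one kernel-verified Lean document; each statement's English description precedes it below -/
import Mathlib

section
/- Let O be a ℂ-subalgebra of ℂ[[t]] such that ℂ[[t]]/O is finite-dimensional over ℂ, let f ∈ O be nonzero with ν = ord(f), and let S = {ord(h) : h ∈ fO, h ≠ 0}. Then there exists a unique g ∈ O such that gO = fO, the coefficient of t^ν in g equals 1, and the coefficient of t^i in g equals 0 for every i < ν and for every i > ν with i ∈ S. -/
set_option maxHeartbeats 1000000
set_option synthInstance.maxHeartbeats 400000

/-- The order of a formal power series: the smallest `i` such that the coefficient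
of `t^i` is nonzero (junk value `0` for the zero series). -/
noncomputable def ord (f : PowerSeries ℂ) : ℕ :=
  sInf {i : ℕ | PowerSeries.coeff i f ≠ 0}

/-!
Since `K⟦X⟧ ⧸ O` is finite-dimensional, `O` contains a nonconstant polynomial `P`, and
Cayley–Hamilton for multiplication by `P` on `K⟦X⟧ ⧸ O` gives a nonzero `χ(P)` with
`χ(P) K⟦X⟧ ⊆ O`; hence `X ^ N K⟦X⟧ ⊆ O` for some `N`. Consequently the elements of `O` with
nonzero constant term are units of `O`, and every series of order at least `ord f + N` lies
in `fO`. A normalized generator is obtained from `f` by Gaussian elimination against elements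
of `fO` of the orders in `S` below `ord f + N`, followed by truncation there. It is unique
because the difference of two normalized generators lies in `fO` and has a vanishing
coefficient at its own order.
-/

open PowerSeries
open scoped Polynomial

lemma ord_eq_toNat_order (f : PowerSeries ℂ) : ord f = f.order.toNat := by
  rcases eq_or_ne f 0 with rfl | hf
  · simp [ord]
  · have hne : {i : ℕ | coeff i f ≠ 0}.Nonempty := exists_coeff_ne_zero_iff_ne_zero.mpr hf
    rw [order_eq_nat.mpr ⟨Nat.sInf_mem hne, fun i hi => not_not.mp (Nat.notMem_of_lt_sInf hi)⟩]
    rfl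

namespace PowerSeries

variable {K : Type*} [Field K]

lemma exists_eq_mul_of_X_pow_order_add_dvd {f s : K⟦X⟧} (hf : f ≠ 0) {k : ℕ}
    (h : X ^ (f.order.toNat + k) ∣ s) : ∃ q, X ^ k ∣ q ∧ s = f * q := by
  have hu : IsUnit (divXPowOrder f) := by
    rw [isUnit_iff_constantCoeff, isUnit_iff_ne_zero, Ne, constantCoeff_divXPowOrder_eq_zero_iff]
    exact hf
  obtain ⟨u, hu⟩ := hu
  obtain ⟨t, rfl⟩ := h
  refine ⟨↑u⁻¹ * (X ^ k * t), Dvd.dvd.mul_left (dvd_mul_right _ _) _, ?_⟩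
  conv_rhs => rw [← X_pow_order_mul_divXPowOrder (f := f), ← hu, mul_assoc,
    Units.mul_inv_cancel_left]
  ring

lemma coeff_order_mul (a f : K⟦X⟧) :
    coeff f.order.toNat (a * f) = constantCoeff a * coeff f.order.toNat f := by
  set ν := f.order.toNat
  conv_lhs => rw [← X_pow_order_mul_divXPowOrder (f := f), mul_left_comm]
  rw [coeff_X_pow_mul', if_pos le_rfl, Nat.sub_self, coeff_zero_eq_constantCoeff, map_mul,
    constantCoeff_divXPowOrder]

end PowerSeries

namespace Submodule

variable {R M : Type*} [CommRing R] [AddCommGroup M] [Module R M]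

lemma aeval_mapQ_mkQ (N : Submodule R M) (T : Module.End R M) (hT : N ≤ N.comap T) (q : R[X])
    (m : M) : Polynomial.aeval (N.mapQ N T hT) q (N.mkQ m) = N.mkQ (Polynomial.aeval T q m) := by
  induction q using Polynomial.induction_on' with
  | add p q hp hq => simp only [map_add, LinearMap.add_apply, hp, hq]
  | monomial n a =>
    rw [Polynomial.aeval_monomial, Polynomial.aeval_monomial, Module.End.mul_apply,
      Module.End.mul_apply, ← mapQ_pow N hT]
    simp

lemma exists_monic_forall_aeval_mem (N : Submodule R M) [Module.Free R (M ⧸ N)]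
    [Module.Finite R (M ⧸ N)] (T : Module.End R M) (hT : N ≤ N.comap T) :
    ∃ χ : R[X], χ.Monic ∧ ∀ m, Polynomial.aeval T χ m ∈ N := by
  refine ⟨(N.mapQ N T hT).charpoly, LinearMap.charpoly_monic _, fun m => ?_⟩
  rw [← Quotient.mk_eq_zero, ← mkQ_apply, ← aeval_mapQ_mkQ N T hT, LinearMap.aeval_self_charpoly,
    LinearMap.zero_apply]

end Submodule

namespace Subalgebra

lemma isUnit_of_constantCoeff_ne_zero {K : Type*} [Field K] {O : Subalgebra K K⟦X⟧} {N : ℕ}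
    (hN : ∀ s : K⟦X⟧, X ^ N ∣ s → s ∈ O) {a : O} (ha : constantCoeff (a : K⟦X⟧) ≠ 0) :
    IsUnit a := by
  set c := algebraMap K K⟦X⟧ (constantCoeff (a : K⟦X⟧))⁻¹
  set b : K⟦X⟧ := 1 - c * a
  have hbO : b ∈ O := O.sub_mem O.one_mem (O.mul_mem (O.algebraMap_mem _) a.2)
  have hXb : X ∣ b := X_dvd_iff.mpr (by simp [b, c, ha])
  have hmul : (a : K⟦X⟧) * (a : K⟦X⟧)⁻¹ = 1 := PowerSeries.mul_inv_cancel _ ha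
  -- `a = c⁻¹ (1 - b)`, so `a⁻¹` is a geometric series in `b` whose tail is divisible by `X ^ N`
  have hinv : (a : K⟦X⟧)⁻¹ = c * ∑ i ∈ Finset.range N, b ^ i + (a : K⟦X⟧)⁻¹ * b ^ N := by
    calc (a : K⟦X⟧)⁻¹
        = (a : K⟦X⟧)⁻¹ * ((1 - b) * ∑ i ∈ Finset.range N, b ^ i) + (a : K⟦X⟧)⁻¹ * b ^ N := by
          rw [mul_neg_geom_sum]; ring
      _ = c * ∑ i ∈ Finset.range N, b ^ i + (a : K⟦X⟧)⁻¹ * b ^ N := by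
          linear_combination (c * ∑ i ∈ Finset.range N, b ^ i) * hmul
  have hinvO : (a : K⟦X⟧)⁻¹ ∈ O := by
    rw [hinv]
    exact O.add_mem (O.mul_mem (O.algebraMap_mem _) (O.sum_mem fun i _ => O.pow_mem hbO i))
      (hN _ (dvd_mul_of_dvd_right (pow_dvd_pow_of_dvd hXb N) _))
  exact IsUnit.of_mul_eq_one ⟨_, hinvO⟩ (Subtype.ext hmul)

variable {K : Type*} [Field K] (O : Subalgebra K K⟦X⟧)
  [FiniteDimensional K (K⟦X⟧ ⧸ Subalgebra.toSubmodule O)]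

lemma exists_natDegree_ne_zero_coe_mem : ∃ P : K[X], P.natDegree ≠ 0 ∧ (P : K⟦X⟧) ∈ O := by
  let L : K[X] →ₗ[K] K⟦X⟧ ⧸ Subalgebra.toSubmodule O := (Subalgebra.toSubmodule O).mkQ ∘ₗ
    (Polynomial.coeToPowerSeries.algHom K).toLinearMap ∘ₗ LinearMap.mulLeft K Polynomial.X
  obtain ⟨r, hr, hr0⟩ : ∃ r ∈ LinearMap.ker L, r ≠ 0 := by
    by_contra! h
    exact Polynomial.not_finite (Module.Finite.of_injective L
      (LinearMap.ker_eq_bot.mp (eq_bot_iff.mpr fun r hr => h r hr)))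
  refine ⟨Polynomial.X * r, by simp [Polynomial.natDegree_mul Polynomial.X_ne_zero hr0], ?_⟩
  simpa [L, Submodule.Quotient.mk_eq_zero] using hr

lemma exists_X_pow_dvd_imp_mem : ∃ N : ℕ, ∀ s : K⟦X⟧, X ^ N ∣ s → s ∈ O := by
  obtain ⟨P, hP, hPO⟩ := O.exists_natDegree_ne_zero_coe_mem
  obtain ⟨χ, hχ, hχO⟩ := (Subalgebra.toSubmodule O).exists_monic_forall_aeval_mem
    (Algebra.lmul K K⟦X⟧ P) fun s hs => O.mul_mem hPO hs
  have hc : (χ.comp P : K⟦X⟧) ≠ 0 := by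
    rw [Ne, Polynomial.coe_eq_zero_iff, Polynomial.comp_eq_zero_iff]
    rintro (h | ⟨-, h⟩)
    · exact hχ.ne_zero h
    · exact hP (by rw [h, Polynomial.natDegree_C])
  refine ⟨(χ.comp P : K⟦X⟧).order.toNat, fun s hs => ?_⟩
  obtain ⟨q, -, rfl⟩ := exists_eq_mul_of_X_pow_order_add_dvd hc (k := 0) hs
  have hmem := hχO q
  rw [Polynomial.aeval_algHom_apply] at hmem
  have hcomp : Polynomial.aeval (P : K⟦X⟧) χ = (χ.comp P : K⟦X⟧) := by
    simpa [Polynomial.comp_eq_aeval] using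
      Polynomial.aeval_algHom_apply (Polynomial.coeToPowerSeries.algHom K) P χ
  simpa [hcomp] using hmem

end Subalgebra

section Normalization

variable {K : Type*} [Field K] {O : Subalgebra K K⟦X⟧}

def orderSet (J : Submodule K O) : Set ℕ :=
  {n | ∃ h ∈ J, (h : K⟦X⟧) ≠ 0 ∧ n = (h : K⟦X⟧).order.toNat}

lemma eq_of_sub_mem_of_coeff_eq {J : Submodule K O} {g₁ g₂ : O} (hJ : g₁ - g₂ ∈ J)
    (h : ∀ i ∈ orderSet J, coeff i (g₁ : K⟦X⟧) = coeff i (g₂ : K⟦X⟧)) : g₁ = g₂ := by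
  by_contra hne
  have hd : ((g₁ - g₂ : O) : K⟦X⟧) ≠ 0 := by
    rwa [Ne, ZeroMemClass.coe_eq_zero, sub_eq_zero]
  have hcoeff := h _ ⟨_, hJ, hd, rfl⟩
  rw [Subalgebra.coe_sub] at hd hcoeff
  exact coeff_order hd (by rw [map_sub, hcoeff, sub_self])

lemma exists_mem_coeff_eq_of_mem_orderSet (J : Submodule K O) (m : ℕ) (h : O) (k : ℕ) :
    ∃ e ∈ J, (∀ i ≤ m, coeff i (e : K⟦X⟧) = 0) ∧
      ∀ i ∈ orderSet J, m < i → i < k → coeff i (e : K⟦X⟧) = coeff i (h : K⟦X⟧) := by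
  induction k with
  | zero => exact ⟨0, J.zero_mem, by simp, by simp⟩
  | succ k ih =>
    obtain ⟨e, heJ, hlow, hS⟩ := ih
    by_cases hk : k ∈ orderSet J ∧ m < k
    · obtain ⟨⟨b, hbJ, hb0, rfl⟩, hmk⟩ := hk
      have hlt : ∀ i < (b : K⟦X⟧).order.toNat, coeff i (b : K⟦X⟧) = 0 :=
        fun i hi => coeff_of_lt_order_toNat i hi
      set k := (b : K⟦X⟧).order.toNat
      refine ⟨e + ((coeff k (h : K⟦X⟧) - coeff k (e : K⟦X⟧)) / coeff k (b : K⟦X⟧)) • b,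
        J.add_mem heJ (J.smul_mem _ hbJ), fun i hi => ?_, fun i hiS hmi hik => ?_⟩
      · simp [hlow i hi, hlt i (by omega)]
      · rcases Nat.lt_succ_iff_lt_or_eq.mp hik with hik | rfl
        · simp [hS i hiS hmi hik, hlt i hik]
        · simp only [AddMemClass.coe_add, SetLike.val_smul, map_add, map_smul, smul_eq_mul]
          rw [div_mul_cancel₀ _ (coeff_order hb0), add_sub_cancel]
    · refine ⟨e, heJ, hlow, fun i hiS hmi hik => ?_⟩
      rcases Nat.lt_succ_iff_lt_or_eq.mp hik with hik | rfl
      · exact hS i hiS hmi hik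
      · exact absurd ⟨hiS, hmi⟩ hk

lemma coeff_of_mem_span_singleton_of_lt {f g : O} (hg : g ∈ Ideal.span {f}) {i : ℕ}
    (hi : i < (f : K⟦X⟧).order.toNat) : coeff i (g : K⟦X⟧) = 0 := by
  obtain ⟨a, rfl⟩ := Ideal.mem_span_singleton'.mp hg
  exact X_pow_dvd_iff.mp (X_pow_order_dvd.mul_left _) i hi

lemma span_singleton_eq_of_mem_span_singleton {N : ℕ} (hN : ∀ s : K⟦X⟧, X ^ N ∣ s → s ∈ O)
    {f g : O} (hg : g ∈ Ideal.span {f}) (hν : coeff (f : K⟦X⟧).order.toNat (g : K⟦X⟧) ≠ 0) :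
    Ideal.span {g} = Ideal.span {f} := by
  obtain ⟨a, rfl⟩ := Ideal.mem_span_singleton'.mp hg
  have ha : constantCoeff (a : K⟦X⟧) ≠ 0 := by
    intro h0
    apply hν
    rw [Subalgebra.coe_mul, coeff_order_mul, h0, zero_mul]
  exact Ideal.span_singleton_mul_left_unit (Subalgebra.isUnit_of_constantCoeff_ne_zero hN ha) f

lemma exists_mem_span_singleton_normalized {N : ℕ} (hN : ∀ s : K⟦X⟧, X ^ N ∣ s → s ∈ O)
    (f : O) (hf : (f : K⟦X⟧) ≠ 0) :
    ∃ g ∈ Ideal.span {f}, coeff (f : K⟦X⟧).order.toNat (g : K⟦X⟧) = 1 ∧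
      ∀ i ∈ orderSet ((Ideal.span {f}).restrictScalars K),
        (f : K⟦X⟧).order.toNat < i → coeff i (g : K⟦X⟧) = 0 := by
  set ν := (f : K⟦X⟧).order.toNat
  set M := ν + (N + 1)
  set h : O := (coeff ν (f : K⟦X⟧))⁻¹ • f
  have hh : h ∈ Ideal.span {f} :=
    Submodule.smul_of_tower_mem _ _ (Ideal.mem_span_singleton_self f)
  obtain ⟨e, he, hlow, hS⟩ :=
    exists_mem_coeff_eq_of_mem_orderSet ((Ideal.span {f}).restrictScalars K) ν h M
  set g₀ : K⟦X⟧ := ((h - e : O) : K⟦X⟧)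
  obtain ⟨q, hq, htail⟩ := exists_eq_mul_of_X_pow_order_add_dvd hf (k := N + 1)
    (s := g₀ - (trunc M g₀ : K⟦X⟧)) <| X_pow_dvd_iff.mpr fun i hi => by
      rw [map_sub, Polynomial.coeff_coe, coeff_trunc, if_pos hi, sub_self]
  have hqO : q ∈ O := hN q ((pow_dvd_pow X N.le_succ).trans hq)
  -- the tail of `h - e` beyond `M` is `f q` with `q ∈ O`, so truncating at `M` stays in `fO`
  refine ⟨h - e - f * ⟨q, hqO⟩, sub_mem (sub_mem hh he) (Ideal.mul_mem_right _ _
    (Ideal.mem_span_singleton_self f)), ?_⟩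
  have hg : ((h - e - f * ⟨q, hqO⟩ : O) : K⟦X⟧) = (trunc M g₀ : K⟦X⟧) := by
    rw [Subalgebra.coe_sub, Subalgebra.coe_mul, ← htail, sub_sub_cancel]
  have hcoeff :
      ∀ i < M, coeff i (trunc M g₀ : K⟦X⟧) = coeff i (h : K⟦X⟧) - coeff i (e : K⟦X⟧) := by
    intro i hi
    rw [Polynomial.coeff_coe, coeff_trunc, if_pos hi, ← map_sub]
    rfl
  rw [hg]
  refine ⟨?_, fun i hi hνi => ?_⟩
  · rw [hcoeff ν (by omega), hlow ν le_rfl, sub_zero, Subalgebra.coe_smul, map_smul, smul_eq_mul,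
      inv_mul_cancel₀ (coeff_order hf)]
  · by_cases hiM : i < M
    · rw [hcoeff i hiM, hS i hi hνi hiM, sub_self]
    · rw [Polynomial.coeff_coe, coeff_trunc, if_neg hiM]

end Normalization

/-- Let `O ⊆ ℂ[[t]]` be a `ℂ`-subalgebra with `dim_ℂ ℂ[[t]]/O < ∞`, let `f ∈ O` be
nonzero with `ν = ord f`, and let `S = {ord h : h ∈ fO, h ≠ 0}`.  Then there is a unique
generator `g` of the ideal `fO` whose coefficient of `t^ν` is `1` and whose coefficient
of `t^i` vanishes for all `i < ν` and all `i > ν` with `i ∈ S`. -/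
theorem existsUnique_normalized_generator
    (O : Subalgebra ℂ (PowerSeries ℂ))
    (hO : FiniteDimensional ℂ ((PowerSeries ℂ) ⧸ Subalgebra.toSubmodule O))
    (f : PowerSeries ℂ) (hfO : f ∈ O) (hf : f ≠ 0) :
    ∃! g : O,
      Ideal.span {g} = Ideal.span {(⟨f, hfO⟩ : O)} ∧
      PowerSeries.coeff (ord f) (g : PowerSeries ℂ) = 1 ∧
      (∀ i, i < ord f → PowerSeries.coeff i (g : PowerSeries ℂ) = 0) ∧
      (∀ i, i > ord f →
        i ∈ {n : ℕ | ∃ h ∈ Ideal.span ({(⟨f, hfO⟩ : O)} : Set O),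
          (h : PowerSeries ℂ) ≠ 0 ∧ n = ord (h : PowerSeries ℂ)} →
        PowerSeries.coeff i (g : PowerSeries ℂ) = 0) := by
  simp only [ord_eq_toNat_order]
  obtain ⟨N, hN⟩ := O.exists_X_pow_dvd_imp_mem
  obtain ⟨g, hgf, hg1, hgS⟩ := exists_mem_span_singleton_normalized hN ⟨f, hfO⟩ hf
  have hspan := span_singleton_eq_of_mem_span_singleton hN hgf (by rw [hg1]; exact one_ne_zero)
  have hlow : ∀ i < f.order.toNat, coeff i (g : ℂ⟦X⟧) = 0 :=
    fun i hi => coeff_of_mem_span_singleton_of_lt hgf hi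
  refine ⟨g, ⟨hspan, hg1, hlow, fun i hi hiS => hgS i hiS hi⟩, ?_⟩
  rintro g' ⟨hg'f, hg'1, hg'lt, hg'S⟩
  have hmem : g' - g ∈ Ideal.span {(⟨f, hfO⟩ : O)} :=
    Ideal.sub_mem _ (hg'f ▸ Ideal.mem_span_singleton_self g') hgf
  refine eq_of_sub_mem_of_coeff_eq (J := (Ideal.span {(⟨f, hfO⟩ : O)}).restrictScalars ℂ) hmem
    fun i hi => ?_
  rcases lt_trichotomy i f.order.toNat with hi' | rfl | hi'
  · rw [hg'lt i hi', hlow i hi']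
  · rw [hg'1, hg1]
  · rw [hg'S i hi' hi, hgS i hi hi']
end

section
/- Let k and n be coprime positive integers, let Γ = {ak + bn : a, b ∈ ℕ}, and let φ : {0, …, k−1} → ℕ satisfy φ(k−1) ≤ φ(k−2) ≤ ⋯ ≤ φ(0) ≤ φ(k−1) + n. Let Δ_φ = {αk + βn : 0 ≤ β ≤ k−1, α ∈ ℕ, α ≥ φ(β)}. Then the minimal number of generators m(Δ_φ) of the semigroup ideal Δ_φ equals the number of strict inequalities among the k inequalities φ(k−1) ≤ φ(k−2), φ(k−2) ≤ φ(k−3), …, φ(1) ≤ φ(0), φ(0) ≤ φ(k−1) + n. -/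
/-!
Since `Δ_φ` is an ideal of `Γ = ⟨k, n⟩`, its minimal generating set is unique: it consists of
the elements of `Δ_φ` from which neither `k` nor `n` can be subtracted inside `Δ_φ`. Every
element of `Γ` is uniquely `α k + β n` with `β < k`, so `k` cannot be subtracted exactly at the
corners `φ(β) k + β n`. Adding `n` moves `β` to `β + 1` cyclically, carrying `n` into the
coefficient of `k` when `β = k - 1`; hence the corner at `β + 1` has no `n`-predecessor in `Δ_φ`
exactly when the inequality between `φ(β)` and `φ(β + 1)` (resp. `φ(k - 1) + n` and `φ(0)`)
is strict.
-/

/-- The minimal number of generators of a semigroup ideal `Δ` of a numerical semigroup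
`Γ ⊆ ℕ`: the least `r` such that `Δ = (a₁ + Γ) ∪ ⋯ ∪ (a_r + Γ)` for some `a_j ∈ Δ`. -/
noncomputable def semigroupIdealMinGens (Γ Δ : Set ℕ) : ℕ :=
  sInf {r : ℕ | ∃ a : Fin r → ℕ, (∀ j, a j ∈ Δ) ∧ Δ = ⋃ j, ((a j + ·) '' Γ)}

def minimalGenerators (Γ Δ : Set ℕ) : Set ℕ :=
  {m ∈ Δ | ∀ d ∈ Δ, ∀ γ ∈ Γ, m = d + γ → γ = 0}

section MinimalGenerators

variable {Γ Δ : Set ℕ}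

theorem minimalGenerators_subset_range {r : ℕ} {a : Fin r → ℕ} (ha : ∀ j, a j ∈ Δ)
    (hΔ : Δ = ⋃ j, (a j + ·) '' Γ) : minimalGenerators Γ Δ ⊆ Set.range a := by
  rintro m ⟨hmΔ, hmin⟩
  rw [hΔ, Set.mem_iUnion] at hmΔ
  obtain ⟨j, γ, hγ, rfl⟩ := hmΔ
  exact ⟨j, by simp [hmin (a j) (ha j) γ hγ rfl]⟩

theorem ncard_minimalGenerators_le {r : ℕ} {a : Fin r → ℕ} (ha : ∀ j, a j ∈ Δ)
    (hΔ : Δ = ⋃ j, (a j + ·) '' Γ) : (minimalGenerators Γ Δ).ncard ≤ r :=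
  calc (minimalGenerators Γ Δ).ncard ≤ (Set.range a).ncard :=
        Set.ncard_le_ncard (minimalGenerators_subset_range ha hΔ) (Set.finite_range a)
    _ ≤ Nat.card (Fin r) := Finite.card_range_le a
    _ = r := Nat.card_fin r

theorem exists_mem_minimalGenerators_add (h0 : 0 ∈ Γ) (hadd : ∀ x ∈ Γ, ∀ y ∈ Γ, x + y ∈ Γ)
    {x : ℕ} (hx : x ∈ Δ) : ∃ m ∈ minimalGenerators Γ Δ, ∃ γ ∈ Γ, x = m + γ := by
  induction x using Nat.strong_induction_on with
  | _ x ih =>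
  by_cases hmin : x ∈ minimalGenerators Γ Δ
  · exact ⟨x, hmin, 0, h0, rfl⟩
  obtain ⟨d, hd, γ, hγ, rfl, hγ0⟩ : ∃ d ∈ Δ, ∃ γ ∈ Γ, x = d + γ ∧ γ ≠ 0 := by
    simpa [minimalGenerators, hx] using hmin
  obtain ⟨m, hm, γ', hγ', rfl⟩ := ih d (by omega) hd
  exact ⟨m, hm, γ' + γ, hadd _ hγ' _ hγ, by ring⟩

theorem semigroupIdealMinGens_eq_ncard (h0 : 0 ∈ Γ) (hadd : ∀ x ∈ Γ, ∀ y ∈ Γ, x + y ∈ Γ)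
    (hideal : ∀ d ∈ Δ, ∀ γ ∈ Γ, d + γ ∈ Δ) (hfin : (minimalGenerators Γ Δ).Finite) :
    semigroupIdealMinGens Γ Δ = (minimalGenerators Γ Δ).ncard := by
  have hgen : (minimalGenerators Γ Δ).ncard ∈
      {r : ℕ | ∃ a : Fin r → ℕ, (∀ j, a j ∈ Δ) ∧ Δ = ⋃ j, ((a j + ·) '' Γ)} := by
    have := hfin.to_subtype
    let e := Finite.equivFin (minimalGenerators Γ Δ)
    refine ⟨fun j => e.symm j, fun j => (e.symm j).2.1, ?_⟩
    ext x
    simp only [Set.mem_iUnion, Set.mem_image]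
    constructor
    · intro hx
      obtain ⟨m, hm, γ, hγ, rfl⟩ := exists_mem_minimalGenerators_add h0 hadd hx
      exact ⟨e ⟨m, hm⟩, γ, hγ, by rw [e.symm_apply_apply]⟩
    · rintro ⟨j, γ, hγ, rfl⟩
      exact hideal _ (e.symm j).2.1 γ hγ
  exact le_antisymm (Nat.sInf_le hgen)
    (le_csInf ⟨_, hgen⟩ fun _ ⟨_, ha, hΔ⟩ => ncard_minimalGenerators_le ha hΔ)

end MinimalGenerators

def twoGenerated (k n : ℕ) : Set ℕ := {m : ℕ | ∃ a b : ℕ, m = a * k + b * n}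

section TwoGenerated

variable {k n : ℕ} {Δ : Set ℕ}

theorem zero_mem_twoGenerated : 0 ∈ twoGenerated k n := ⟨0, 0, by ring⟩

theorem add_mem_twoGenerated {x y : ℕ} (hx : x ∈ twoGenerated k n) (hy : y ∈ twoGenerated k n) :
    x + y ∈ twoGenerated k n := by
  obtain ⟨a, b, rfl⟩ := hx
  obtain ⟨a', b', rfl⟩ := hy
  exact ⟨a + a', b + b', by ring⟩

theorem add_twoGenerated_mem (hk : ∀ d ∈ Δ, d + k ∈ Δ) (hn : ∀ d ∈ Δ, d + n ∈ Δ) :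
    ∀ d ∈ Δ, ∀ γ ∈ twoGenerated k n, d + γ ∈ Δ := by
  rintro d hd _ ⟨a, b, rfl⟩
  induction b with
  | zero =>
    induction a with
    | zero => simpa using hd
    | succ a ih => simpa [add_mul, ← add_assoc] using hk _ ih
  | succ b ih => simpa [add_mul, ← add_assoc] using hn _ ih

theorem mem_minimalGenerators_twoGenerated_iff (hk : 0 < k) (hn : 0 < n)
    (hideal : ∀ d ∈ Δ, ∀ γ ∈ twoGenerated k n, d + γ ∈ Δ) {m : ℕ} :
    m ∈ minimalGenerators (twoGenerated k n) Δ ↔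
      m ∈ Δ ∧ (∀ d ∈ Δ, m ≠ d + k) ∧ ∀ d ∈ Δ, m ≠ d + n := by
  constructor
  · rintro ⟨hm, hmin⟩
    refine ⟨hm, fun d hd h => ?_, fun d hd h => ?_⟩
    · have := hmin d hd k ⟨1, 0, by ring⟩ h; omega
    · have := hmin d hd n ⟨0, 1, by ring⟩ h; omega
  · rintro ⟨hm, hmk, hmn⟩
    refine ⟨hm, ?_⟩
    rintro d hd _ ⟨a | a, b | b, rfl⟩ rfl
    · simp
    · exact absurd (by ring) (hmn _ (hideal d hd (0 * k + b * n) ⟨0, b, rfl⟩))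
    · exact absurd (by ring) (hmk _ (hideal d hd (a * k + 0 * n) ⟨a, 0, rfl⟩))
    · exact absurd (by ring) (hmk _ (hideal d hd (a * k + (b + 1) * n) ⟨a, b + 1, rfl⟩))

end TwoGenerated

theorem Nat.Coprime.eq_of_mul_add_mul_eq {k n α β α' β' : ℕ} (hkn : k.Coprime n)
    (hβ : β < k) (hβ' : β' < k) (h : α * k + β * n = α' * k + β' * n) : α = α' ∧ β = β' := by
  have hmod : β * n ≡ β' * n [MOD k] := by
    simpa [Nat.ModEq, Nat.add_mod] using congrArg (· % k) h
  have hββ' : β = β' := Nat.ModEq.eq_of_lt_of_lt (hmod.cancel_right_of_coprime hkn) hβ hβ'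
  subst hββ'
  exact ⟨Nat.eq_of_mul_eq_mul_right (by omega : 0 < k) (by omega : α * k = α' * k), rfl⟩

section Rotation

variable {k : ℕ}

theorem finRotate_of_succ_lt {i : Fin k} (h : (i : ℕ) + 1 < k) :
    finRotate k i = ⟨(i : ℕ) + 1, h⟩ := by
  obtain ⟨k, rfl⟩ : ∃ k', k = k' + 1 := ⟨k - 1, by omega⟩
  exact finRotate_of_lt (by omega : (i : ℕ) < k)

theorem finRotate_of_not_succ_lt {i : Fin k} (h : ¬(i : ℕ) + 1 < k) :
    finRotate k i = ⟨0, i.pos⟩ := by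
  obtain ⟨k, rfl⟩ : ∃ k', k = k' + 1 := ⟨k - 1, by have := i.pos; omega⟩
  obtain rfl : i = Fin.last k := Fin.ext (by simp only [Fin.val_last]; omega)
  exact finRotate_last

def rotateCarry (n : ℕ) (i : Fin k) : ℕ := if (i : ℕ) + 1 < k then 0 else n

theorem val_mul_add_eq_finRotate (n : ℕ) (i : Fin k) :
    (i : ℕ) * n + n = (finRotate k i : ℕ) * n + rotateCarry n i * k := by
  by_cases h : (i : ℕ) + 1 < k
  · simp only [finRotate_of_succ_lt h, rotateCarry, if_pos h]
    ring
  · have hi : (i : ℕ) + 1 = k := by omega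
    rw [finRotate_of_not_succ_lt h, rotateCarry, if_neg h]
    calc (i : ℕ) * n + n = n * ((i : ℕ) + 1) := by ring
      _ = 0 * n + n * k := by rw [hi]; ring

end Rotation

def staircaseIdeal (k n : ℕ) (φ : Fin k → ℕ) : Set ℕ :=
  {m : ℕ | ∃ β : Fin k, ∃ α : ℕ, φ β ≤ α ∧ m = α * k + (β : ℕ) * n}

def staircaseCorner (k n : ℕ) (φ : Fin k → ℕ) (β : Fin k) : ℕ := φ β * k + (β : ℕ) * n

section Staircase

variable {k n : ℕ} {φ : Fin k → ℕ}

theorem staircaseCorner_mem (β : Fin k) : staircaseCorner k n φ β ∈ staircaseIdeal k n φ :=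
  ⟨β, φ β, le_rfl, rfl⟩

theorem staircaseCorner_injective (hkn : k.Coprime n) : Function.Injective (staircaseCorner k n φ) :=
  fun β β' h => Fin.ext (hkn.eq_of_mul_add_mul_eq β.isLt β'.isLt h).2

theorem add_left_mem_staircaseIdeal {m : ℕ} (hm : m ∈ staircaseIdeal k n φ) :
    m + k ∈ staircaseIdeal k n φ := by
  obtain ⟨β, α, hα, rfl⟩ := hm
  exact ⟨β, α + 1, by omega, by ring⟩

theorem add_right_mem_staircaseIdeal (hstep : ∀ i, φ (finRotate k i) ≤ φ i + rotateCarry n i)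
    {m : ℕ} (hm : m ∈ staircaseIdeal k n φ) : m + n ∈ staircaseIdeal k n φ := by
  obtain ⟨β, α, hα, rfl⟩ := hm
  refine ⟨finRotate k β, α + rotateCarry n β, (hstep β).trans (by omega), ?_⟩
  linear_combination val_mul_add_eq_finRotate n β

theorem exists_eq_staircaseCorner_iff (hkn : k.Coprime n) {m : ℕ} :
    (m ∈ staircaseIdeal k n φ ∧ ∀ d ∈ staircaseIdeal k n φ, m ≠ d + k) ↔
      ∃ β, m = staircaseCorner k n φ β := by
  constructor
  · rintro ⟨⟨β, α, hα, rfl⟩, hmk⟩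
    refine ⟨β, ?_⟩
    obtain hlt | rfl := hα.lt_or_eq
    · obtain ⟨a, rfl⟩ : ∃ a, α = a + 1 := ⟨α - 1, by omega⟩
      exact (hmk (a * k + β * n) ⟨β, a, by omega, rfl⟩ (by ring)).elim
    · rfl
  · rintro ⟨β, rfl⟩
    refine ⟨staircaseCorner_mem β, ?_⟩
    rintro _ ⟨β', α', hα', rfl⟩ h
    obtain ⟨hα, hβ⟩ := hkn.eq_of_mul_add_mul_eq β.isLt β'.isLt
      (h.trans (by ring) : φ β * k + β * n = (α' + 1) * k + β' * n)
    obtain rfl := Fin.ext hβ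
    omega

theorem exists_staircaseCorner_finRotate_eq_add_iff (hkn : k.Coprime n) (i : Fin k) :
    (∃ d ∈ staircaseIdeal k n φ, staircaseCorner k n φ (finRotate k i) = d + n) ↔
      φ i + rotateCarry n i ≤ φ (finRotate k i) := by
  constructor
  · rintro ⟨_, ⟨β, α, hα, rfl⟩, h⟩
    have hcarry := val_mul_add_eq_finRotate n β
    obtain ⟨hα', hβ⟩ := hkn.eq_of_mul_add_mul_eq (finRotate k i).isLt (finRotate k β).isLt
      (h.trans (by linear_combination hcarry) :
        φ (finRotate k i) * k + (finRotate k i : ℕ) * n =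
          (α + rotateCarry n β) * k + (finRotate k β : ℕ) * n)
    obtain rfl := (finRotate k).injective (Fin.ext hβ)
    omega
  · intro h
    refine ⟨(φ (finRotate k i) - rotateCarry n i) * k + i * n,
      ⟨i, _, by omega, rfl⟩, ?_⟩
    have hcarry := val_mul_add_eq_finRotate n i
    have hle : rotateCarry n i * k ≤ φ (finRotate k i) * k := Nat.mul_le_mul_right k (by omega)
    rw [staircaseCorner, Nat.sub_mul]
    omega

theorem add_mem_staircaseIdeal (hstep : ∀ i, φ (finRotate k i) ≤ φ i + rotateCarry n i) :
    ∀ d ∈ staircaseIdeal k n φ, ∀ γ ∈ twoGenerated k n, d + γ ∈ staircaseIdeal k n φ :=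
  add_twoGenerated_mem (fun _ => add_left_mem_staircaseIdeal)
    (fun _ => add_right_mem_staircaseIdeal hstep)

theorem minimalGenerators_staircaseIdeal (hk : 0 < k) (hn : 0 < n) (hkn : k.Coprime n)
    (hstep : ∀ i, φ (finRotate k i) ≤ φ i + rotateCarry n i) :
    minimalGenerators (twoGenerated k n) (staircaseIdeal k n φ) =
      staircaseCorner k n φ ∘ finRotate k '' {i | φ (finRotate k i) < φ i + rotateCarry n i} := by
  ext m
  rw [mem_minimalGenerators_twoGenerated_iff hk hn (add_mem_staircaseIdeal hstep), ← and_assoc,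
    exists_eq_staircaseCorner_iff hkn]
  constructor
  · rintro ⟨⟨β, rfl⟩, hmn⟩
    obtain ⟨i, rfl⟩ := (finRotate k).surjective β
    refine ⟨i, Set.mem_ofPred.2 (not_le.1 fun hle => ?_), rfl⟩
    obtain ⟨d, hd, h⟩ := (exists_staircaseCorner_finRotate_eq_add_iff hkn i).2 hle
    exact hmn d hd h
  · rintro ⟨i, hi, rfl⟩
    exact ⟨⟨_, rfl⟩, fun d hd h =>
      not_le.2 hi ((exists_staircaseCorner_finRotate_eq_add_iff hkn i).1 ⟨d, hd, h⟩)⟩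

theorem finRotate_le_add_rotateCarry (hk : 0 < k)
    (hchain : ∀ i : Fin k, ∀ h : (i : ℕ) + 1 < k, φ ⟨(i : ℕ) + 1, h⟩ ≤ φ i)
    (hwrap : φ ⟨0, hk⟩ ≤ φ ⟨k - 1, Nat.sub_lt hk one_pos⟩ + n) (i : Fin k) :
    φ (finRotate k i) ≤ φ i + rotateCarry n i := by
  by_cases h : (i : ℕ) + 1 < k
  · rw [finRotate_of_succ_lt h, rotateCarry, if_pos h, add_zero]
    exact hchain i h
  · obtain rfl : i = ⟨k - 1, Nat.sub_lt hk one_pos⟩ := Fin.ext (by simp only; omega)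
    rw [finRotate_of_not_succ_lt h, rotateCarry, if_neg h]
    exact hwrap

theorem finRotate_lt_add_rotateCarry_iff (hk : 0 < k) (i : Fin k) :
    φ (finRotate k i) < φ i + rotateCarry n i ↔
      if h : (i : ℕ) + 1 < k then φ ⟨(i : ℕ) + 1, h⟩ < φ i else φ ⟨0, hk⟩ < φ i + n := by
  by_cases h : (i : ℕ) + 1 < k
  · rw [dif_pos h, finRotate_of_succ_lt h, rotateCarry, if_pos h, add_zero]
  · rw [dif_neg h, finRotate_of_not_succ_lt h, rotateCarry, if_neg h]

end Staircase

/-- For coprime positive `k, n`, `Γ = ⟨k,n⟩` and a staircase `φ` with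
`φ(k−1) ≤ ⋯ ≤ φ(0) ≤ φ(k−1) + n`, the minimal number of generators of the semigroup
ideal `Δ_φ` equals the number of strict inequalities among the `k` inequalities
`φ(k−1) ≤ φ(k−2), …, φ(1) ≤ φ(0), φ(0) ≤ φ(k−1) + n`. -/
theorem minGens_eq_strict_steps (k n : ℕ) (hk : 0 < k) (hn : 0 < n)
    (hkn : Nat.Coprime k n)
    (Γ : Set ℕ) (hΓ : Γ = {m : ℕ | ∃ a b : ℕ, m = a * k + b * n})
    (φ : Fin k → ℕ)
    (hchain : ∀ i : Fin k, ∀ h : (i : ℕ) + 1 < k, φ ⟨(i : ℕ) + 1, h⟩ ≤ φ i)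
    (hwrap : φ ⟨0, hk⟩ ≤ φ ⟨k - 1, Nat.sub_lt hk one_pos⟩ + n) :
    semigroupIdealMinGens Γ
        {m : ℕ | ∃ β : Fin k, ∃ α : ℕ, φ β ≤ α ∧ m = α * k + (β : ℕ) * n} =
      Set.ncard {i : Fin k |
        if h : (i : ℕ) + 1 < k then φ ⟨(i : ℕ) + 1, h⟩ < φ i
        else φ ⟨0, hk⟩ < φ i + n} := by
  subst hΓ
  have hstep := finRotate_le_add_rotateCarry hk hchain hwrap
  simp_rw [← finRotate_lt_add_rotateCarry_iff hk]
  have hM := minimalGenerators_staircaseIdeal hk hn hkn hstep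
  rw [← Set.ncard_image_of_injective _
      ((staircaseCorner_injective hkn).comp (finRotate k).injective), ← hM]
  exact semigroupIdealMinGens_eq_ncard zero_mem_twoGenerated
    (fun _ hx _ hy => add_mem_twoGenerated hx hy) (add_mem_staircaseIdeal hstep)
    ((Set.toFinite _).subset hM.subset)
end

section
/- Let k and n be coprime positive integers, let Γ = {ak + bn : a, b ∈ ℕ}, and let N_l denote the number of semigroup ideals of Γ of colength l (a finite number for each l). Then in the formal power series ring ℤ[[q]] one has (1 − q^{k+n}) · Σ_{l ≥ 0} N_l q^l = binom(k+n, k)_q, the Gaussian binomial coefficient. -/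
/-- The `q`-factorial `[s]!_q = ∏_{j=1}^{s} (1 − q^j)` in `ℤ[[q]]`. -/
noncomputable def qFact (s : ℕ) : PowerSeries ℤ :=
  ∏ j ∈ Finset.range s, (1 - PowerSeries.X ^ (j + 1))

/-- The Gaussian binomial coefficient `binom(m, r)_q = [m]!_q / ([r]!_q [m−r]!_q)`,
the quotient being taken in `ℤ[[q]]` (the denominator has constant term `1`, hence is
a unit with inverse `invOfUnit _ 1`). -/
noncomputable def gaussBinom (m r : ℕ) : PowerSeries ℤ :=
  qFact m * PowerSeries.invOfUnit (qFact r * qFact (m - r)) 1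

/-!
Every element of `⟨k, n⟩` is uniquely `b n + j k` with `b < k`, by coprimality. An ideal `Δ` is
therefore determined by its heights `f b = min {j | b n + j k ∈ Δ}`; closure under `+ n` says
exactly that `f` is antitone with `f 0 ≤ f (k - 1) + n`, and the colength of `Δ` is `∑ f b`.
So `∑ N_l q^l` counts antitone `k`-tuples of spread at most `n` by their sum. Splitting on whether
the last entry vanishes gives `S = B + q^k S`, where `B` counts partitions in a `(k - 1) × n` box,
and the `q`-Pascal recursion gives `B [k - 1]!_q [n]!_q = [k - 1 + n]!_q`. Multiplying
`(1 - q^k) S = B` by `1 - q^{k+n}` gives `binom(k + n, k)_q`.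
-/

open Finset PowerSeries

section AntitoneTuples

open Classical in
noncomputable def antitoneTuples (a l : ℕ) : Finset (Fin a → ℕ) :=
  (Fintype.piFinset fun _ => range (l + 1)).filter fun f => Antitone f ∧ ∑ i, f i = l

theorem mem_antitoneTuples {a l : ℕ} {f : Fin a → ℕ} :
    f ∈ antitoneTuples a l ↔ Antitone f ∧ ∑ i, f i = l := by
  simp only [antitoneTuples, mem_filter, Fintype.mem_piFinset, mem_range, Nat.lt_succ_iff,
    and_iff_right_iff_imp]
  rintro ⟨-, rfl⟩ i
  exact single_le_sum (fun j _ => Nat.zero_le (f j)) (mem_univ i)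

theorem antitone_snoc_zero_iff {α : Type*} [AddCommMonoid α] [PartialOrder α]
    [CanonicallyOrderedAdd α] {a : ℕ} {g : Fin a → α} :
    Antitone (Fin.snoc g 0 : Fin (a + 1) → α) ↔ Antitone g := by
  refine ⟨fun h i j hij => by simpa using h (Fin.castSucc_le_castSucc_iff.mpr hij), fun h => ?_⟩
  intro i j hij
  induction j using Fin.lastCases with
  | last => simp
  | cast j =>
    induction i using Fin.lastCases with
    | last => exact absurd hij (not_le.mpr (Fin.castSucc_lt_last j))
    | cast i => simpa using h (Fin.castSucc_le_castSucc_iff.mp hij)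

theorem card_filter_last_eq_zero (a l : ℕ) (P : (Fin (a + 1) → ℕ) → Prop) [DecidablePred P] :
    #((antitoneTuples (a + 1) l).filter fun f => P f ∧ f (Fin.last a) = 0) =
      #((antitoneTuples a l).filter fun g => P (Fin.snoc g 0)) := by
  have snoc_init : ∀ f : Fin (a + 1) → ℕ, f (Fin.last a) = 0 → Fin.snoc (Fin.init f) 0 = f :=
    fun f hf => hf ▸ Fin.snoc_init_self f
  refine card_nbij' Fin.init (fun g => Fin.snoc g 0) ?_ ?_ ?_ ?_
  · intro f hf
    simp only [coe_filter, mem_antitoneTuples, Set.mem_ofPred_eq] at hf ⊢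
    obtain ⟨⟨hanti, hsum⟩, hP, hlast⟩ := hf
    rw [Fin.sum_univ_castSucc, hlast, add_zero] at hsum
    rw [← snoc_init f hlast, antitone_snoc_zero_iff] at hanti
    rw [← snoc_init f hlast] at hP
    exact ⟨⟨hanti, hsum⟩, hP⟩
  · intro g hg
    simp only [coe_filter, mem_antitoneTuples, Set.mem_ofPred_eq] at hg ⊢
    simp_all [antitone_snoc_zero_iff, Fin.sum_univ_castSucc]
  · intro f hf
    simp only [coe_filter, Set.mem_ofPred_eq] at hf
    exact snoc_init f hf.2.2
  · intro g _
    simp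

theorem card_filter_last_ne_zero (a l : ℕ) (P : (Fin (a + 1) → ℕ) → Prop) [DecidablePred P] :
    #((antitoneTuples (a + 1) (l + (a + 1))).filter fun f => P f ∧ f (Fin.last a) ≠ 0) =
      #((antitoneTuples (a + 1) l).filter fun g => P (g + 1)) := by
  have pos : ∀ f : Fin (a + 1) → ℕ, Antitone f → f (Fin.last a) ≠ 0 → ∀ i, 1 ≤ f i :=
    fun f hf hlast i => (Nat.one_le_iff_ne_zero.mpr hlast).trans (hf (Fin.le_last i))
  refine card_nbij' (· - 1) (· + 1) ?_ ?_ ?_ ?_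
  · intro f hf
    simp only [coe_filter, mem_antitoneTuples, Set.mem_ofPred_eq] at hf ⊢
    obtain ⟨⟨hanti, hsum⟩, hP, hlast⟩ := hf
    have hf : f - 1 + 1 = f := funext fun i => Nat.sub_add_cancel (pos f hanti hlast i)
    refine ⟨⟨fun i j hij => Nat.sub_le_sub_right (hanti hij) 1, ?_⟩, hf ▸ hP⟩
    rw [← hf] at hsum
    simpa [sum_add_distrib] using hsum
  · intro g hg
    simp only [coe_filter, mem_antitoneTuples, Set.mem_ofPred_eq] at hg ⊢
    obtain ⟨⟨hanti, hsum⟩, hP⟩ := hg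
    refine ⟨⟨fun i j hij => Nat.add_le_add_right (hanti hij) 1, ?_⟩, hP, by simp⟩
    simp [sum_add_distrib, hsum]
  · intro f hf
    simp only [coe_filter, mem_antitoneTuples, Set.mem_ofPred_eq] at hf
    exact funext fun i => Nat.sub_add_cancel (pos f hf.1.1 hf.2.2 i)
  · intro g _
    simp

theorem filter_last_ne_zero_eq_empty {a l : ℕ} (hl : l < a + 1) :
    (antitoneTuples (a + 1) l).filter (fun f => f (Fin.last a) ≠ 0) = ∅ := by
  refine filter_false_of_mem fun f hf hlast => hl.not_ge ?_
  obtain ⟨hanti, rfl⟩ := mem_antitoneTuples.mp hf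
  calc a + 1 = ∑ _i : Fin (a + 1), 1 := by simp
    _ ≤ ∑ i, f i := sum_le_sum fun i _ =>
      (Nat.one_le_iff_ne_zero.mpr hlast).trans (hanti (Fin.le_last i))

end AntitoneTuples

section AntitoneGenFun

open Classical in
noncomputable def antitoneGenFun (a : ℕ) (P : (Fin a → ℕ) → Prop) : PowerSeries ℤ :=
  mk fun l => (#((antitoneTuples a l).filter P) : ℤ)

theorem antitoneGenFun_succ (a : ℕ) (P : (Fin (a + 1) → ℕ) → Prop) :
    antitoneGenFun (a + 1) P = antitoneGenFun a (fun g => P (Fin.snoc g 0)) +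
      X ^ (a + 1) * antitoneGenFun (a + 1) (fun g => P (g + 1)) := by
  classical
  ext l
  simp only [antitoneGenFun, map_add, coeff_X_pow_mul', coeff_mk]
  rw [← card_filter_add_card_filter_not (s := (antitoneTuples (a + 1) l).filter P)
    (fun f => f (Fin.last a) = 0), filter_filter, filter_filter, card_filter_last_eq_zero,
    Nat.cast_add]
  congr 1
  split_ifs with hl
  · obtain ⟨m, rfl⟩ := Nat.exists_eq_add_of_le' hl
    rw [Nat.add_sub_cancel, card_filter_last_ne_zero]
  · rw [filter_eq_empty_iff.mpr fun f hf hPf =>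
      filter_eq_empty_iff.mp (filter_last_ne_zero_eq_empty (not_le.mp hl)) hf hPf.2]
    simp

theorem antitoneGenFun_zero {P : (Fin 0 → ℕ) → Prop} (hP : P 0) : antitoneGenFun 0 P = 1 := by
  classical
  ext l
  simp only [antitoneGenFun, coeff_mk, coeff_one]
  split_ifs with hl
  · subst hl
    rw [card_eq_one.mpr ⟨0, eq_singleton_iff_unique_mem.mpr ⟨mem_filter.mpr
      ⟨mem_antitoneTuples.mpr ⟨antitone_const, by simp⟩, hP⟩, fun f _ => Subsingleton.elim f 0⟩⟩]
    simp
  · rw [filter_eq_empty_iff.mpr fun f hf =>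
      absurd (mem_antitoneTuples.mp hf).2 (by simp [Ne.symm hl])]
    simp

theorem antitoneGenFun_false (a : ℕ) : antitoneGenFun a (fun _ => False) = 0 := by
  ext l
  simp [antitoneGenFun]

end AntitoneGenFun

section GaussianBinomial

noncomputable def boxGenFun (a b : ℕ) : PowerSeries ℤ :=
  antitoneGenFun a fun f => ∀ i, f i ≤ b

theorem boxGenFun_zero_left (b : ℕ) : boxGenFun 0 b = 1 :=
  antitoneGenFun_zero fun i => i.elim0

theorem boxGenFun_zero_right (a : ℕ) : boxGenFun a 0 = 1 := by
  induction a with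
  | zero => exact boxGenFun_zero_left 0
  | succ a ih =>
    have hfalse : (fun g : Fin (a + 1) → ℕ => ∀ i, (g + 1) i ≤ 0) = fun _ => False :=
      funext fun g => eq_false fun h => by simpa using h 0
    rw [boxGenFun, antitoneGenFun_succ, hfalse, antitoneGenFun_false, mul_zero, add_zero]
    simpa [Fin.forall_fin_succ', boxGenFun] using ih

theorem boxGenFun_succ_succ (a b : ℕ) :
    boxGenFun (a + 1) (b + 1) = boxGenFun a (b + 1) + X ^ (a + 1) * boxGenFun (a + 1) b := by
  rw [boxGenFun, antitoneGenFun_succ]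
  simp [Fin.forall_fin_succ', boxGenFun]

theorem qFact_succ (s : ℕ) : qFact (s + 1) = qFact s * (1 - X ^ (s + 1)) :=
  prod_range_succ _ s

theorem constantCoeff_qFact (s : ℕ) : constantCoeff (qFact s) = 1 := by
  simp [qFact, map_prod]

theorem boxGenFun_mul_qFact_mul_qFact (a b : ℕ) :
    boxGenFun a b * qFact a * qFact b = qFact (a + b) := by
  induction a generalizing b with
  | zero => simp [boxGenFun_zero_left, qFact]
  | succ a iha =>
    induction b with
    | zero => simp [boxGenFun_zero_right, qFact]
    | succ b ihb =>
      have iha' := iha (b + 1)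
      rw [qFact_succ, ← add_assoc] at iha'
      rw [qFact_succ, add_right_comm] at ihb
      rw [boxGenFun_succ_succ, show a + 1 + (b + 1) = a + b + 1 + 1 by omega,
        qFact_succ (a + b + 1), qFact_succ a, qFact_succ b]
      linear_combination (1 - X ^ (a + 1)) * iha' + X ^ (a + 1) * (1 - X ^ (b + 1)) * ihb

theorem gaussBinom_eq_of_mul_eq {r s : ℕ} {A : PowerSeries ℤ}
    (h : A * (qFact r * qFact s) = qFact (r + s)) : gaussBinom (r + s) r = A := by
  have hunit : constantCoeff (qFact r * qFact s) = ((1 : ℤˣ) : ℤ) := by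
    simp [constantCoeff_qFact]
  rw [gaussBinom, Nat.add_sub_cancel_left, ← h, mul_assoc, mul_invOfUnit _ _ hunit, mul_one]

end GaussianBinomial

section BoundedSpread

noncomputable def boundedSpreadGenFun (k n : ℕ) : PowerSeries ℤ :=
  antitoneGenFun k fun f => ∀ i j, f i ≤ f j + n

theorem boundedSpreadGenFun_succ (a n : ℕ) :
    boundedSpreadGenFun (a + 1) n =
      boxGenFun a n + X ^ (a + 1) * boundedSpreadGenFun (a + 1) n := by
  have hsnoc : (fun g : Fin a → ℕ =>
      ∀ i j, (Fin.snoc g 0 : Fin (a + 1) → ℕ) i ≤ (Fin.snoc g 0 : Fin (a + 1) → ℕ) j + n) =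
      fun g => ∀ i, g i ≤ n := by
    funext g
    simp only [Fin.forall_fin_succ', Fin.snoc_castSucc, Fin.snoc_last, zero_add, zero_le,
      and_true, implies_true]
    exact propext ⟨fun h i => (h i).2, fun h i => ⟨fun j => (h i).trans le_add_self, h i⟩⟩
  have hsucc : (fun g : Fin (a + 1) → ℕ => ∀ i j, (g + 1) i ≤ (g + 1) j + n) =
      fun g => ∀ i j, g i ≤ g j + n := by
    funext g
    simp only [Pi.add_apply, Pi.one_apply]
    exact propext (forall₂_congr fun i j => by omega)
  conv_lhs => rw [boundedSpreadGenFun, antitoneGenFun_succ, hsnoc, hsucc]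
  rfl

theorem one_sub_X_pow_mul_boundedSpreadGenFun (a n : ℕ) :
    (1 - X ^ (a + 1 + n)) * boundedSpreadGenFun (a + 1) n = gaussBinom (a + 1 + n) (a + 1) := by
  refine (gaussBinom_eq_of_mul_eq ?_).symm
  have hbox := boxGenFun_mul_qFact_mul_qFact a n
  have hrec := boundedSpreadGenFun_succ a n
  rw [qFact_succ, show a + 1 + n = a + n + 1 by omega, qFact_succ (a + n)]
  linear_combination (1 - X ^ (a + n + 1)) * (hbox + qFact a * qFact n * hrec)

end BoundedSpread

section Semigroup

def numSemigroup (k n : ℕ) : Set ℕ := {m | ∃ a b : ℕ, m = a * k + b * n}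

def IsSemigroupIdeal (Γ Δ : Set ℕ) : Prop :=
  Δ.Nonempty ∧ Δ ⊆ Γ ∧ ∀ δ ∈ Δ, ∀ γ ∈ Γ, δ + γ ∈ Δ

variable {k n : ℕ}

def toSemigroup (k n : ℕ) (p : Fin k × ℕ) : ℕ := p.1 * n + p.2 * k

theorem toSemigroup_add_mul_k (b : Fin k) (j c : ℕ) :
    toSemigroup k n (b, j) + c * k = toSemigroup k n (b, j + c) := by
  simp only [toSemigroup]; ring

theorem toSemigroup_add_mul_n {b b' : Fin k} (j : ℕ) {c e : ℕ} (h : (b : ℕ) + c = b' + e * k) :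
    toSemigroup k n (b, j) + c * n = toSemigroup k n (b', j + e * n) := by
  have := congrArg (· * n) h
  simp only [toSemigroup] at this ⊢
  linear_combination this

theorem toSemigroup_injective (hkn : Nat.Coprime k n) : Function.Injective (toSemigroup k n) := by
  rintro ⟨b, j⟩ ⟨b', j'⟩ h
  simp only [toSemigroup] at h
  have hb : (b : ℕ) = b' := by
    have : (b : ℕ) * n ≡ b' * n [MOD k] := by
      simpa [Nat.ModEq, Nat.add_mul_mod_self_right] using congrArg (· % k) h
    exact (this.cancel_right_of_coprime hkn).eq_of_lt_of_lt b.2 b'.2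
  rw [hb, add_right_inj] at h
  exact Prod.ext (Fin.ext hb) (Nat.eq_of_mul_eq_mul_right b.pos h)

theorem range_toSemigroup (hk : 0 < k) : Set.range (toSemigroup k n) = numSemigroup k n := by
  ext m
  constructor
  · rintro ⟨⟨b, j⟩, rfl⟩
    exact ⟨j, b, add_comm _ _⟩
  · rintro ⟨a, c, rfl⟩
    refine ⟨(⟨c % k, Nat.mod_lt c hk⟩, a + c / k * n), ?_⟩
    have := congrArg (· * n) (Nat.mod_add_div c k)
    simp only [toSemigroup] at this ⊢
    linear_combination this

theorem add_mul_mem_of_add_mem {Δ : Set ℕ} {c : ℕ} (h : ∀ δ ∈ Δ, δ + c ∈ Δ) (a : ℕ) :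
    ∀ δ ∈ Δ, δ + a * c ∈ Δ := by
  induction a with
  | zero => simp
  | succ a ih => exact fun δ hδ => by simpa [add_mul, ← add_assoc] using h _ (ih δ hδ)

theorem add_numSemigroup_mem {Δ : Set ℕ} (hk : ∀ δ ∈ Δ, δ + k ∈ Δ) (hn : ∀ δ ∈ Δ, δ + n ∈ Δ) :
    ∀ δ ∈ Δ, ∀ γ ∈ numSemigroup k n, δ + γ ∈ Δ := by
  rintro δ hδ _ ⟨a, b, rfl⟩
  rw [← add_assoc]
  exact add_mul_mem_of_add_mem hn b _ (add_mul_mem_of_add_mem hk a δ hδ)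

/-- The ideal whose column `{b n + j k | j ∈ ℕ}` starts at height `f b`. -/
def heightsIdeal (n : ℕ) (f : Fin k → ℕ) : Set ℕ :=
  toSemigroup k n '' {p | f p.1 ≤ p.2}

theorem toSemigroup_mem_heightsIdeal (hkn : Nat.Coprime k n) {f : Fin k → ℕ} {b : Fin k}
    {j : ℕ} : toSemigroup k n (b, j) ∈ heightsIdeal n f ↔ f b ≤ j :=
  (toSemigroup_injective hkn).mem_set_image

theorem heightsIdeal_injective (hkn : Nat.Coprime k n) :
    Function.Injective (heightsIdeal n : (Fin k → ℕ) → Set ℕ) := fun f g h =>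
  funext fun b => eq_of_forall_ge_iff fun j => by
    rw [← toSemigroup_mem_heightsIdeal hkn, h, toSemigroup_mem_heightsIdeal hkn]

theorem isSemigroupIdeal_heightsIdeal (hk : 0 < k) {f : Fin k → ℕ} (hanti : Antitone f)
    (hspread : ∀ i j, f i ≤ f j + n) : IsSemigroupIdeal (numSemigroup k n) (heightsIdeal n f) := by
  refine ⟨Set.Nonempty.image _ ⟨(⟨0, hk⟩, f ⟨0, hk⟩), le_refl (f ⟨0, hk⟩)⟩,
    range_toSemigroup hk ▸ Set.image_subset_range _ _, add_numSemigroup_mem ?_ ?_⟩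
  · rintro _ ⟨⟨b, j⟩, hle, rfl⟩
    have h := toSemigroup_add_mul_k (n := n) b j 1
    rw [one_mul] at h
    exact h ▸ ⟨_, hle.trans j.le_succ, rfl⟩
  · rintro _ ⟨⟨b, j⟩, hle, rfl⟩
    by_cases hb : (b : ℕ) + 1 < k
    · have h := toSemigroup_add_mul_n (n := n) (b := b) (b' := ⟨b + 1, hb⟩) j (c := 1) (e := 0)
        (by simp)
      rw [one_mul, zero_mul, add_zero] at h
      exact h ▸ ⟨_, (hanti (show b ≤ ⟨b + 1, hb⟩ from Nat.le_succ _)).trans hle, rfl⟩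
    · have h := toSemigroup_add_mul_n (n := n) (b := b) (b' := ⟨0, hk⟩) j (c := 1) (e := 1)
        (by simp; omega)
      rw [one_mul] at h
      exact h ▸ ⟨_, (hspread _ b).trans (Nat.add_le_add_right hle n), rfl⟩

theorem exists_heightsIdeal_eq (hk : 0 < k) {Δ : Set ℕ}
    (hΔ : IsSemigroupIdeal (numSemigroup k n) Δ) :
    ∃ f : Fin k → ℕ, Antitone f ∧ (∀ i j, f i ≤ f j + n) ∧ heightsIdeal n f = Δ := by
  classical
  obtain ⟨⟨δ, hδ⟩, hsub, hadd⟩ := hΔ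
  rw [← range_toSemigroup hk] at hsub
  have add_mul_n : ∀ m ∈ Δ, ∀ c, m + c * n ∈ Δ := fun m hm c => hadd m hm _ ⟨0, c, by ring⟩
  obtain ⟨⟨b₀, j₀⟩, rfl⟩ := hsub hδ
  have hcol : ∀ b : Fin k, ∃ j, toSemigroup k n (b, j) ∈ Δ := fun b =>
    ⟨_, toSemigroup_add_mul_n (b := b₀) (b' := b) j₀ (c := b + k - b₀) (e := 1) (by omega) ▸
      add_mul_n _ hδ _⟩
  set f : Fin k → ℕ := fun b => Nat.find (hcol b)
  have hmem : ∀ b, toSemigroup k n (b, f b) ∈ Δ := fun b => Nat.find_spec (hcol b)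
  have hmin : ∀ b j, toSemigroup k n (b, j) ∈ Δ → f b ≤ j := fun b j => Nat.find_min' (hcol b)
  refine ⟨f, fun b b' hbb' => ?_, fun i j => ?_, ?_⟩
  · have := toSemigroup_add_mul_n (n := n) (b := b) (b' := b') (f b) (c := b' - b) (e := 0)
      (by have := Fin.le_def.mp hbb'; omega)
    exact hmin b' _ (by simpa [this] using add_mul_n _ (hmem b) (b' - b))
  · have := toSemigroup_add_mul_n (n := n) (b := j) (b' := i) (f j) (c := k + i - j) (e := 1)
      (by omega)
    exact hmin i _ (by simpa [this] using add_mul_n _ (hmem j) (k + i - j))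
  · ext m
    constructor
    · rintro ⟨⟨b, j⟩, hle, rfl⟩
      have := toSemigroup_add_mul_k (n := n) b (f b) (j - f b)
      rw [Nat.add_sub_cancel' hle] at this
      exact this ▸ hadd _ (hmem b) _ ⟨j - f b, 0, by ring⟩
    · intro hm
      obtain ⟨⟨b, j⟩, rfl⟩ := hsub hm
      exact ⟨(b, j), hmin b j hm, rfl⟩

theorem ncard_numSemigroup_diff_heightsIdeal (hk : 0 < k) (hkn : Nat.Coprime k n)
    (f : Fin k → ℕ) : (numSemigroup k n \ heightsIdeal n f).ncard = ∑ b, f b := by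
  have hcompl : Set.univ \ {p : Fin k × ℕ | f p.1 ≤ p.2} =
      ↑((univ.sigma fun b => range (f b)).map (Equiv.sigmaEquivProd _ _).toEmbedding) := by
    ext ⟨b, j⟩
    simp
  rw [← range_toSemigroup hk, ← Set.image_univ, heightsIdeal,
    ← Set.image_sdiff (toSemigroup_injective hkn), Set.ncard_image_of_injective _
    (toSemigroup_injective hkn), hcompl, Set.ncard_coe_finset, card_map, card_sigma]
  simp

theorem ncard_setOf_isSemigroupIdeal (hk : 0 < k) (hkn : Nat.Coprime k n) (l : ℕ) :
    ({Δ | IsSemigroupIdeal (numSemigroup k n) Δ ∧ (numSemigroup k n \ Δ).ncard = l}.ncard : ℤ) =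
      coeff l (boundedSpreadGenFun k n) := by
  have hideals : {Δ | IsSemigroupIdeal (numSemigroup k n) Δ ∧ (numSemigroup k n \ Δ).ncard = l} =
      heightsIdeal (k := k) n '' ↑((antitoneTuples k l).filter fun f => ∀ i j, f i ≤ f j + n) := by
    ext Δ
    simp only [Set.mem_ofPred_eq, coe_filter, mem_antitoneTuples, Set.mem_image]
    constructor
    · rintro ⟨hΔ, rfl⟩
      obtain ⟨f, hanti, hspread, rfl⟩ := exists_heightsIdeal_eq hk hΔ
      exact ⟨f, ⟨⟨hanti, (ncard_numSemigroup_diff_heightsIdeal hk hkn f).symm⟩, hspread⟩, rfl⟩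
    · rintro ⟨f, ⟨⟨hanti, rfl⟩, hspread⟩, rfl⟩
      exact ⟨isSemigroupIdeal_heightsIdeal hk hanti hspread,
        ncard_numSemigroup_diff_heightsIdeal hk hkn f⟩
  rw [hideals, (heightsIdeal_injective hkn).injOn.ncard_image, Set.ncard_coe_finset]
  simp only [boundedSpreadGenFun, antitoneGenFun, coeff_mk]
  congr

end Semigroup

theorem generating_function_ideals_eq_gaussBinom_general (k n : ℕ) (hk : 0 < k)
    (hkn : Nat.Coprime k n)
    (Γ : Set ℕ) (hΓ : Γ = {m : ℕ | ∃ a b : ℕ, m = a * k + b * n})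
    (N : ℕ → ℕ)
    (hN : ∀ l, N l = Set.ncard {Δ : Set ℕ |
      (Δ.Nonempty ∧ Δ ⊆ Γ ∧ ∀ δ ∈ Δ, ∀ γ ∈ Γ, δ + γ ∈ Δ) ∧ (Γ \ Δ).ncard = l}) :
    (1 - PowerSeries.X ^ (k + n)) * PowerSeries.mk (fun l => (N l : ℤ)) =
      gaussBinom (k + n) k := by
  have hgen : mk (fun l => (N l : ℤ)) = boundedSpreadGenFun k n := by
    ext l
    rw [coeff_mk, hN l, hΓ]
    exact ncard_setOf_isSemigroupIdeal hk hkn l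
  obtain ⟨a, rfl⟩ : ∃ a, k = a + 1 := ⟨k - 1, by omega⟩
  rw [hgen, one_sub_X_pow_mul_boundedSpreadGenFun]

/-- For coprime positive `k, n` and `Γ = ⟨k,n⟩`, letting `N_l` be the number of
semigroup ideals of `Γ` of colength `l`, one has
`(1 − q^{k+n}) Σ_l N_l q^l = binom(k+n, k)_q` in `ℤ[[q]]`. -/
theorem generating_function_ideals_eq_gaussBinom (k n : ℕ) (hk : 0 < k) (hn : 0 < n)
    (hkn : Nat.Coprime k n)
    (Γ : Set ℕ) (hΓ : Γ = {m : ℕ | ∃ a b : ℕ, m = a * k + b * n})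
    (N : ℕ → ℕ)
    (hN : ∀ l, N l = Set.ncard {Δ : Set ℕ |
      (Δ.Nonempty ∧ Δ ⊆ Γ ∧ ∀ δ ∈ Δ, ∀ γ ∈ Γ, δ + γ ∈ Δ) ∧ (Γ \ Δ).ncard = l}) :
    (1 - PowerSeries.X ^ (k + n)) * PowerSeries.mk (fun l => (N l : ℤ)) =
      gaussBinom (k + n) k :=
  generating_function_ideals_eq_gaussBinom_general k n hk hkn Γ hΓ N hN
end
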